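/- arXiv:1108.1823 — 3 statements merged into one kernel-verified Lean document; each statement's English description precedes it below -/
import Mathlib

section
/- Let R be a commutative ℚ-algebra, let k be a nonnegative integer and let a, b, c ∈ R. Then the determinant of the matrix A^k(a,b,c) equals the product ∏_{i=1}^{k} C(a+b+i, i). In particular, the determinant does not depend on c. -/
/-- Generalized binomial coefficient `C(x, p) = (1/p!) ∏_{j=0}^{p-1} (x - j)`
in a commutative `ℚ`-algebra. -/
noncomputable def gchoose {R : Type*} [CommRing R] [Algebra ℚ R] (x : R) (p : ℕ) : R :=
  algebraMap ℚ R (1 / p.factorial) * ∏ j ∈ Finset.range p, (x - (j : R))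

/-- The `(k+2) × (k+2)` matrix `A^k(a,b,c)`: for `0 ≤ p ≤ k` the `(p,q)` entry is
`C(q+a, p) * C(k-q+b, k-p)`, and the `(k+1, q)` entry is `C(q+c, k+1)`. -/
noncomputable def matA {R : Type*} [CommRing R] [Algebra ℚ R] (k : ℕ) (a b c : R) :
    Matrix (Fin (k + 2)) (Fin (k + 2)) R :=
  fun p q =>
    if (p : ℕ) ≤ k then
      gchoose ((q : ℕ) + a) (p : ℕ) * gchoose ((k : R) - (q : ℕ) + b) (k - (p : ℕ))
    else
      gchoose ((q : ℕ) + c) (k + 1)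

/-!
Let `N_k(a,b)` be the top-left `(k+1) × (k+1)` block of `A^k(a,b,c)`. For `p ≤ k`, row `p` of
`A^k` lists the values at `q = 0, …, k+1` of a polynomial in `q` of degree `≤ k`, while the last
row lists the values of `C(q + c, k + 1)`, whose `(k+1)`-st forward difference is `1`. Adding to
the last column the combination of all columns given by the `(k+1)`-st forward difference at `0`
therefore turns it into the last unit vector, so `det A^k(a,b,c) = det N_k(a,b)` for every `c`.

On `N_{k+1}(a,b)`, the upper bidiagonal row operation
`row_p ↦ (k+1-p) row_p + (p+1) row_{p+1}` produces, by the absorption identity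
`(m+1) C(x,m+1) = (x-m) C(x,m)`, the matrix `A^k(a, b+1, a)` with its first `k+1` rows multiplied
by `a+b+1`. Hence `(k+1)! det N_{k+1}(a,b) = (a+b+1)^(k+1) det N_k(a,b+1)`, and the product
formula follows by induction on `k`.
-/

open Finset Matrix Polynomial
open scoped Nat fwdDiff

section gchoose

variable {R : Type*} [CommRing R] [Algebra ℚ R]

theorem isUnit_natCast_factorial (n : ℕ) : IsUnit ((n ! : ℕ) : R) := by
  simpa using (IsUnit.mk0 (n ! : ℚ) (mod_cast n.factorial_ne_zero)).map (algebraMap ℚ R)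

theorem factorial_mul_gchoose (x : R) (p : ℕ) :
    (p ! : R) * gchoose x p = ∏ j ∈ range p, (x - j) := by
  rw [gchoose, ← mul_assoc, ← map_natCast (algebraMap ℚ R), ← map_mul,
    mul_one_div_cancel (mod_cast p.factorial_ne_zero), map_one, one_mul]

@[simp] theorem gchoose_zero (x : R) : gchoose x 0 = 1 := by simp [gchoose]

theorem succ_mul_gchoose_succ (x : R) (m : ℕ) :
    ((m : R) + 1) * gchoose x (m + 1) = (x - m) * gchoose x m := by
  apply (isUnit_natCast_factorial m).mul_left_cancel
  calc (m ! : R) * ((m + 1) * gchoose x (m + 1)) = ((m + 1)! : R) * gchoose x (m + 1) := by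
        push_cast [Nat.factorial_succ]; ring
    _ = (m ! : R) * ((x - m) * gchoose x m) := by
        rw [factorial_mul_gchoose, prod_range_succ, ← factorial_mul_gchoose]; ring

theorem succ_mul_gchoose_mul_gchoose_add (x y : R) (i m : ℕ) :
    ((m : R) + 1) * (gchoose y i * gchoose x (m + 1)) +
        ((i : R) + 1) * (gchoose y (i + 1) * gchoose x m) =
      (x + y - i - m) * (gchoose y i * gchoose x m) := by
  linear_combination
    gchoose y i * succ_mul_gchoose_succ x m + gchoose x m * succ_mul_gchoose_succ y i

theorem factorial_mul_prod_gchoose (s : R) (k : ℕ) :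
    ((k + 1)! : R) * ∏ i ∈ Icc 1 (k + 1), gchoose (s + i) i =
      (s + 1) ^ (k + 1) * ∏ i ∈ Icc 1 k, gchoose (s + 1 + i) i := by
  induction k with
  | zero => simpa using succ_mul_gchoose_succ (s + 1) 0
  | succ k ih =>
    rw [prod_Icc_succ_top (b := k + 1) (by omega),
      prod_Icc_succ_top (b := k) (f := fun i ↦ gchoose (s + 1 + (i : R)) i) (by omega),
      Nat.factorial_succ,
      show s + 1 + ((k + 1 : ℕ) : R) = s + ((k + 1 + 1 : ℕ) : R) by push_cast; ring]
    have h := succ_mul_gchoose_succ (s + ((k + 1 + 1 : ℕ) : R)) (k + 1)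
    push_cast at h ⊢
    linear_combination ((k + 1)! : R) * (∏ i ∈ Icc 1 (k + 1), gchoose (s + i) i) * h +
      (s + 1) * gchoose (s + (k + 1 + 1)) (k + 1) * ih

theorem gchoose_add_one_succ (x : R) (n : ℕ) :
    gchoose (x + 1) (n + 1) = gchoose x (n + 1) + gchoose x n := by
  apply (isUnit_natCast_factorial (n + 1)).mul_left_cancel
  have hshift : ((n + 1)! : R) * gchoose (x + 1) (n + 1) = (x + 1) * ((n ! : R) * gchoose x n) := by
    rw [factorial_mul_gchoose, factorial_mul_gchoose, prod_range_succ']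
    simp only [Nat.cast_succ, add_sub_add_right_eq_sub, Nat.cast_zero, sub_zero]
    ring
  rw [hshift, Nat.factorial_succ]
  push_cast
  linear_combination (-(n ! : R)) * succ_mul_gchoose_succ x n

theorem fwdDiff_gchoose_succ (c : R) (n : ℕ) :
    Δ_[1] (fun x : R ↦ gchoose (x + c) (n + 1)) = fun x ↦ gchoose (x + c) n := by
  ext x
  rw [fwdDiff, add_right_comm, gchoose_add_one_succ, add_sub_cancel_left]

theorem fwdDiff_iter_gchoose_self (c : R) (n : ℕ) :
    Δ_[1] ^[n] (fun x : R ↦ gchoose (x + c) n) = fun _ ↦ 1 := by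
  induction n with
  | zero => ext; simp
  | succ n ih => rw [Function.iterate_succ_apply, fwdDiff_gchoose_succ, ih]

variable (R) in
noncomputable def gchoosePoly (p : ℕ) : R[X] :=
  C (algebraMap ℚ R (1 / p !)) * ∏ j ∈ range p, (X - C (j : R))

theorem eval_gchoosePoly (x : R) (p : ℕ) : (gchoosePoly R p).eval x = gchoose x p := by
  simp only [gchoosePoly, gchoose, eval_mul, eval_C, eval_prod, eval_sub, eval_X]

theorem natDegree_gchoosePoly_le (p : ℕ) : (gchoosePoly R p).natDegree ≤ p := by
  refine natDegree_C_mul_le _ _ |>.trans <| natDegree_prod_le _ _ |>.trans ?_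
  simpa using sum_le_sum fun j (_ : j ∈ range p) ↦ natDegree_X_sub_C_le (j : R)

theorem fwdDiff_iter_gchoose_mul_gchoose_eq_zero (a b : R) {p q n : ℕ} (h : p + q < n) :
    Δ_[1] ^[n] (fun x : R ↦ gchoose (x + a) p * gchoose (b - x) q) = 0 := by
  set F : R[X] := (gchoosePoly R p).comp (X + C a) * (gchoosePoly R q).comp (C b - X)
  have hF : F.eval = fun x ↦ gchoose (x + a) p * gchoose (b - x) q := by
    ext x; simp [F, eval_gchoosePoly]
  have hdeg : F.natDegree ≤ p * 1 + q * 1 := by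
    refine natDegree_mul_le.trans (add_le_add ?_ ?_) <;>
      refine natDegree_comp_le.trans (Nat.mul_le_mul (natDegree_gchoosePoly_le _) ?_)
    · exact natDegree_add_C.trans_le natDegree_X_le
    · exact (natDegree_sub_le _ _).trans (by simp [natDegree_X_le])
  rw [← hF]
  exact fwdDiff_iter_eq_zero_of_degree_lt (hdeg.trans_lt (by simpa using h))

end gchoose

section determinants

variable {R : Type*} [CommRing R]

theorem det_mul_apply_last_eq_det_submatrix {n : ℕ} (M : Matrix (Fin (n + 1)) (Fin (n + 1)) R)
    {v : Fin (n + 1) → R} (hv : M *ᵥ v = Pi.single (Fin.last n) 1) :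
    M.det * v (Fin.last n) = (M.submatrix Fin.castSucc Fin.castSucc).det := by
  have h := congrFun (congrArg (· *ᵥ v) (adjugate_mul M)) (Fin.last n)
  simp only [← mulVec_mulVec, hv, smul_mulVec, one_mulVec, Pi.smul_apply, smul_eq_mul] at h
  rw [← h, mulVec_single_one, col_apply, adjugate_fin_succ_eq_det_submatrix, Fin.succAbove_last]
  simp [Even.neg_one_pow ⟨n, rfl⟩]

theorem det_eq_det_submatrix_of_fwdDiff_iter {n : ℕ} (M : Matrix (Fin (n + 1)) (Fin (n + 1)) R)
    (f : Fin (n + 1) → R → R) (hM : ∀ p q, M p q = f p (q : ℕ))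
    (hf : ∀ p, Δ_[1] ^[n] (f p) 0 = (Pi.single (Fin.last n) 1 : Fin (n + 1) → R) p) :
    M.det = (M.submatrix Fin.castSucc Fin.castSucc).det := by
  set v : Fin (n + 1) → R := fun q ↦ (((-1 : ℤ) ^ (n - q) * n.choose q : ℤ) : R)
  have hv : M *ᵥ v = Pi.single (Fin.last n) 1 := by
    ext p
    rw [← hf p, fwdDiff_iter_eq_sum_shift, mulVec, dotProduct,
      ← Fin.sum_univ_eq_sum_range
        (fun q ↦ ((-1 : ℤ) ^ (n - q) * n.choose q) • f p (0 + q • 1))]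
    refine sum_congr rfl fun q _ ↦ ?_
    simp [v, hM, zsmul_eq_mul, mul_comm]
  simpa [v] using det_mul_apply_last_eq_det_submatrix M hv

variable (R) in
noncomputable def matL (k : ℕ) : Matrix (Fin (k + 2)) (Fin (k + 2)) R :=
  of <| Fin.lastCases (motive := fun _ ↦ Fin (k + 2) → R) (Pi.single (Fin.last (k + 1)) 1)
    fun i ↦
      ((k + 1 - i : ℕ) : R) • Pi.single i.castSucc 1 + ((i + 1 : ℕ) : R) • Pi.single i.succ 1

theorem det_matL (k : ℕ) : (matL R k).det = ((k + 1)! : R) := by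
  have hL : (matL R k).IsUpperTriangular := by
    intro p q (hqp : q < p)
    induction p using Fin.lastCases with
    | last => simp [matL, hqp.ne]
    | cast i =>
      have : q ≠ i.succ := (hqp.trans Fin.castSucc_lt_succ).ne
      simp [matL, hqp.ne, this]
  rw [det_of_isUpperTriangular hL, Fin.prod_univ_castSucc, ← Nat.descFactorial_self,
    Nat.descFactorial_eq_prod_range, Nat.cast_prod, ← Fin.prod_univ_eq_prod_range]
  simp [matL, Fin.castSucc_lt_succ.ne]

end determinants

section matN

variable {R : Type*} [CommRing R] [Algebra ℚ R]

noncomputable def matN (k : ℕ) (a b : R) : Matrix (Fin (k + 1)) (Fin (k + 1)) R :=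
  of fun p q ↦ gchoose ((q : ℕ) + a) p * gchoose ((k : R) - (q : ℕ) + b) (k - p)

theorem matA_submatrix_castSucc (k : ℕ) (a b c : R) :
    (matA k a b c).submatrix Fin.castSucc Fin.castSucc = matN k a b := by
  ext p q
  simp [matA, matN, Fin.is_le p]

theorem det_matA_eq_det_matN (k : ℕ) (a b c : R) : (matA k a b c).det = (matN k a b).det := by
  rw [← matA_submatrix_castSucc k a b c]
  refine det_eq_det_submatrix_of_fwdDiff_iter _ (fun p x ↦ if (p : ℕ) ≤ k then
      gchoose (x + a) p * gchoose ((k : R) - x + b) (k - p) else gchoose (x + c) (k + 1))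
    (fun _ _ ↦ rfl) fun p ↦ ?_
  induction p using Fin.lastCases with
  | last => simpa using congrFun (fwdDiff_iter_gchoose_self c (k + 1)) 0
  | cast i =>
    have hrow := fwdDiff_iter_gchoose_mul_gchoose_eq_zero a ((k : R) + b)
      (show (i : ℕ) + (k - i) < k + 1 by have := Fin.is_le i; omega)
    simp only [Fin.val_castSucc, Fin.is_le i, if_true, sub_add_eq_add_sub]
    simp [hrow, Fin.castSucc_ne_last]

theorem matL_mul_matN (k : ℕ) (a b : R) :
    matL R k * matN (k + 1) a b =
      diagonal (Fin.lastCases 1 fun _ ↦ a + b + 1) * matA k a (b + 1) a := by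
  ext p q
  rw [diagonal_mul, mul_apply]
  induction p using Fin.lastCases with
  | last => simp [matL, matN, matA, Pi.single_apply]
  | cast i =>
    obtain ⟨m, hm⟩ := Nat.exists_eq_add_of_le (Fin.is_le i)
    have hsucc : k + 1 - i = m + 1 := by omega
    have hk : k - i = m := by omega
    simp only [matL, matN, matA, of_apply, Fin.lastCases_castSucc, Pi.add_apply, Pi.smul_apply,
      Pi.single_apply, smul_eq_mul, mul_ite, mul_one, mul_zero, add_mul, sum_add_distrib, ite_mul,
      zero_mul, sum_ite_eq', mem_univ, if_true, Fin.val_castSucc, Fin.val_succ, Fin.is_le i,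
      Nat.add_sub_add_right, hsucc, hk]
    rw [show ((k + 1 : ℕ) : R) - (q : ℕ) + b = k - (q : ℕ) + (b + 1) by push_cast; ring]
    have hkR : (k : R) = (i : ℕ) + m := by simpa using congrArg (Nat.cast : ℕ → R) hm
    push_cast
    set x : R := k - (q : ℕ) + (b + 1)
    set y : R := (q : ℕ) + a
    linear_combination succ_mul_gchoose_mul_gchoose_add x y i m + gchoose y i * gchoose x m * hkR

theorem factorial_mul_det_matN_succ (k : ℕ) (a b : R) :
    ((k + 1)! : R) * (matN (k + 1) a b).det = (a + b + 1) ^ (k + 1) * (matN k a (b + 1)).det := by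
  simpa [det_mul, det_matL, det_diagonal, Fin.prod_univ_castSucc, det_matA_eq_det_matN] using
    congrArg det (matL_mul_matN k a b)

theorem det_matN (k : ℕ) (a b : R) :
    (matN k a b).det = ∏ i ∈ Icc 1 k, gchoose (a + b + i) i := by
  induction k generalizing b with
  | zero => simp [matN]
  | succ k ih =>
    apply (isUnit_natCast_factorial (k + 1)).mul_left_cancel
    rw [factorial_mul_det_matN_succ, ih, factorial_mul_prod_gchoose, add_assoc a b 1]

end matN

theorem det_matA {R : Type*} [CommRing R] [Algebra ℚ R] (k : ℕ) (a b c : R) :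
    (matA k a b c).det = ∏ i ∈ Finset.Icc 1 k, gchoose (a + b + (i : R)) i := by
  rw [det_matA_eq_det_matN, det_matN]
end

section
/- Let R be a commutative ℚ-algebra, let k ≥ 1 be an integer, let a, b ∈ R, and let p, q be integers with 1 ≤ p ≤ k−1 and 0 ≤ q ≤ k. Then C(q+a, p)·C(k−q+b, k−p) − C(q+a+1, p)·C(k−q+b−1, k−p) = C(q+a+1, p)·C(k−1−q+b, k−1−p) − C(q+a, p−1)·C(k−q+b, k−p). (Equivalently, with B^k_{p,q} := A^k_{p,q}(a,b,c) − A^k_{p,q+1}(a,b,c): B^k_{p,q} = A^{k−1}_{p,q}(a+1,b,c) − A^{k−1}_{p−1,q}(a,b+1,c).) -/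
open Finset

lemma prod_range_succ_add_one_sub {R : Type*} [CommRing R] (x : R) (p : ℕ) :
    ∏ j ∈ range (p + 1), (x + 1 - (j : R)) = (x + 1) * ∏ j ∈ range p, (x - (j : R)) := by
  rw [prod_range_succ', mul_comm]
  push_cast
  simp only [add_sub_add_right_eq_sub, sub_zero]

lemma algebraMap_inv_factorial_succ_mul {R : Type*} [Semiring R] [Algebra ℚ R] (p : ℕ) :
    algebraMap ℚ R (1 / (p + 1).factorial) * ((p : R) + 1)
      = algebraMap ℚ R (1 / p.factorial) := by
  have hp : (p.factorial : ℚ) ≠ 0 := by exact_mod_cast p.factorial_ne_zero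
  rw [show ((p : R) + 1) = algebraMap ℚ R ((p : ℚ) + 1) by simp, ← map_mul, Nat.factorial_succ]
  congr 1
  push_cast
  field_simp

lemma gchoose_succ_succ {R : Type*} [CommRing R] [Algebra ℚ R] (x : R) (p : ℕ) :
    gchoose (x + 1) (p + 1) = gchoose x p + gchoose x (p + 1) := by
  unfold gchoose
  rw [prod_range_succ_add_one_sub, prod_range_succ, ← algebraMap_inv_factorial_succ_mul p]
  ring

theorem matA_col_diff_general {R : Type*} [CommRing R] [Algebra ℚ R] (k : ℕ)
    (a b : R) (p q : ℕ) (hp1 : 1 ≤ p) (hpk : p ≤ k - 1) :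
    gchoose ((q : R) + a) p * gchoose ((k : R) - (q : R) + b) (k - p)
      - gchoose ((q : R) + a + 1) p * gchoose ((k : R) - (q : R) + b - 1) (k - p)
    = gchoose ((q : R) + a + 1) p * gchoose ((k : R) - 1 - (q : R) + b) (k - 1 - p)
      - gchoose ((q : R) + a) (p - 1) * gchoose ((k : R) - (q : R) + b) (k - p) := by
  obtain ⟨p, rfl⟩ : ∃ p', p = p' + 1 := ⟨p - 1, by omega⟩
  obtain ⟨m, hm⟩ : ∃ m, k - (p + 1) = m + 1 := ⟨k - p - 2, by omega⟩
  rw [hm, show k - 1 - (p + 1) = m by omega, Nat.add_sub_cancel]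
  set y := (k : R) - q + b - 1
  rw [show (k : R) - q + b = y + 1 by ring, show (k : R) - 1 - q + b = y by ring,
    gchoose_succ_succ y m, gchoose_succ_succ _ p]
  ring

/-- `B^k_{p,q} = A^{k-1}_{p,q}(a+1,b,c) - A^{k-1}_{p-1,q}(a,b+1,c)` for
`1 ≤ p ≤ k-1` and `0 ≤ q ≤ k`. -/
theorem matA_col_diff {R : Type*} [CommRing R] [Algebra ℚ R] (k : ℕ) (hk : 1 ≤ k)
    (a b : R) (p q : ℕ) (hp1 : 1 ≤ p) (hpk : p ≤ k - 1) (hq : q ≤ k) :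
    gchoose ((q : R) + a) p * gchoose ((k : R) - (q : R) + b) (k - p)
      - gchoose ((q : R) + a + 1) p * gchoose ((k : R) - (q : R) + b - 1) (k - p)
    = gchoose ((q : R) + a + 1) p * gchoose ((k : R) - 1 - (q : R) + b) (k - 1 - p)
      - gchoose ((q : R) + a) (p - 1) * gchoose ((k : R) - (q : R) + b) (k - p) :=
  matA_col_diff_general k a b p q hp1 hpk
end

section
/- Let k be a nonnegative integer and let a, b, c ∈ ℚ with a + b = 0. Then det A^k(a,b,c) = 1; in particular the matrix A^k(a,b,c) is invertible over ℚ. (The cases (a,b,c) = (−1/2, 1/2, −1/2) and (a,b,c) = (1/2, −1/2, 1/2) are the instances used in the paper.) -/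
/-!
Over a binomial ring, `C(x, p) C(k - x, k - p) = ∑_{j ≤ k} (-1)^(p+j) C(j, p) C(x, j)`: expand
`C(x, j) C(j, p) = C(x, p) C(x - p, j - p)` and sum the alternating series in `C(x - p, ·)`. With
`x = q + a` and `k - x = k - q + b`, this writes `A^k(a,b,c)` as an upper unitriangular matrix
times `(C(q + sᵢ, i))_{i,q}`, where `s = (a, …, a, c)`. By Vandermonde the latter is a lower
unitriangular matrix `(C(sᵢ, i - l))` times the upper unitriangular Pascal matrix `(C(q, l))`.
-/

open Finset Matrix

namespace Ring
variable {R : Type*} [CommRing R] [BinomialRing R]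

theorem sum_range_neg_one_pow_mul_choose (r : R) (n : ℕ) :
    ∑ m ∈ range (n + 1), (-1) ^ m * choose r m = (-1) ^ n * choose (r - 1) n := by
  induction n with
  | zero => simp
  | succ n ih =>
    have pascal := choose_succ_succ (r - 1) n
    rw [sub_add_cancel] at pascal
    rw [sum_range_succ, ih, pascal]
    ring

theorem choose_natCast_sub_one_sub (r : R) (n : ℕ) :
    choose ((n : R) - 1 - r) n = (-1) ^ n * choose r n := by
  rw [show (n : R) - 1 - r = -(r + 1 - n) by ring, choose_neg,
    show r + 1 - n + n - 1 = r by ring, Units.smul_def, Int.coe_negOnePow_natCast, zsmul_eq_mul]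
  push_cast; rfl

theorem choose_mul_choose_natCast_sub (r : R) {p n : ℕ} (hp : p ≤ n) :
    choose r p * choose ((n : R) - r) (n - p) =
      ∑ j ∈ range (n + 1), (-1) ^ (p + j) * (j.choose p : R) * choose r j := by
  obtain ⟨m, rfl⟩ := Nat.exists_eq_add_of_le hp
  have low : ∀ j ∈ range p, (-1) ^ (p + j) * (j.choose p : R) * choose r j = 0 := fun j hj => by
    rw [Nat.choose_eq_zero_of_lt (mem_range.mp hj), Nat.cast_zero, mul_zero, zero_mul]
  have high (i : ℕ) : (-1) ^ (p + (p + i)) * ((p + i).choose p : R) * choose r (p + i) =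
      choose r p * ((-1) ^ i * choose (r - p) i) := by
    have h := choose_smul_choose r (Nat.le_add_right p i)
    rw [nsmul_eq_mul, Nat.add_sub_cancel_left] at h
    rw [mul_assoc, h, ← add_assoc, ← two_mul, pow_add, pow_mul, neg_one_sq, one_pow]
    ring
  rw [Nat.add_sub_cancel_left, add_assoc, sum_range_add, sum_eq_zero low, zero_add,
    sum_congr rfl fun i _ => high i, ← mul_sum, sum_range_neg_one_pow_mul_choose,
    ← choose_natCast_sub_one_sub]
  congr 2
  push_cast
  ring

end Ring

theorem det_choose_natCast_add_eq_one {R : Type*} [CommRing R] [BinomialRing R] {n : ℕ}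
    (s : Fin n → R) :
    (of fun i q : Fin n => Ring.choose ((q : ℕ) + s i) i).det = 1 := by
  let L : Matrix (Fin n) (Fin n) R :=
    of fun i l => if l ≤ i then Ring.choose (s i) (i - l) else 0
  let V : Matrix (Fin n) (Fin n) R := of fun l q => Ring.choose ((q : ℕ) : R) l
  have hL : L.det = 1 := by
    rw [det_of_isLowerTriangular L fun i l (hil : i < l) => if_neg (not_le.mpr hil)]
    exact prod_eq_one fun i _ => by simp [L]
  have hV : V.det = 1 := by
    rw [det_of_isUpperTriangular fun l q hql => ?_]
    · exact prod_eq_one fun i _ => by simp [V, Ring.choose_natCast]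
    · simp [V, Ring.choose_natCast, Nat.choose_eq_zero_of_lt (show (q : ℕ) < l from hql)]
  suffices of (fun i q : Fin n => Ring.choose ((q : ℕ) + s i) i) = L * V by
    rw [this, det_mul, hL, hV, one_mul]
  ext i q
  rw [of_apply, mul_apply, Ring.add_choose_eq _ (Commute.all _ _),
    Nat.sum_antidiagonal_eq_sum_range_succ fun l m =>
      Ring.choose ((q : ℕ) : R) l * Ring.choose (s i) m]
  simp only [L, V, of_apply, ite_mul, zero_mul, Fin.le_def]
  rw [Fin.sum_univ_eq_sum_range (fun l => if l ≤ (i : ℕ) then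
      Ring.choose (s i) (i - l) * Ring.choose ((q : ℕ) : R) l else 0) n, ← sum_filter,
    show (range n).filter (· ≤ (i : ℕ)) = range (i + 1) by ext; simp; omega]
  exact sum_congr rfl fun _ _ => mul_comm _ _

section
variable {R : Type*} [CommRing R]

-- `(-1)^(p+j) C(j, p)` is the inverse of the Pascal matrix `C(j, p)`; the last row and column
-- are those of the identity.
def invPascalBorder (k : ℕ) : Matrix (Fin (k + 2)) (Fin (k + 2)) R :=
  of fun p j => Fin.lastCases (if p = Fin.last _ then 1 else 0)
    (fun j : Fin (k + 1) => (-1) ^ (p + j : ℕ) * ((j : ℕ).choose p : R)) j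

theorem det_invPascalBorder (k : ℕ) : (invPascalBorder k : Matrix _ _ R).det = 1 := by
  rw [det_of_isUpperTriangular fun p j hjp => ?_]
  · refine prod_eq_one fun p _ => ?_
    cases p using Fin.lastCases with
    | last => simp [invPascalBorder]
    | cast p => simp [invPascalBorder, ← two_mul, pow_mul]
  · cases j using Fin.lastCases with
    | last => exact absurd hjp (not_lt.mpr (Fin.le_last p))
    | cast j => simp [invPascalBorder, Nat.choose_eq_zero_of_lt (show (j : ℕ) < p from hjp)]

end

section
variable {K : Type*} [Field K] [CharZero K] [Algebra ℚ K]

theorem gchoose_eq_choose (x : K) (n : ℕ) : gchoose x n = Ring.choose x n := by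
  have h := Ring.descPochhammer_eq_factorial_smul_choose x n
  rw [← Polynomial.aeval_eq_smeval, ← Polynomial.eval_map_algebraMap, descPochhammer_map,
    descPochhammer_eval_eq_prod_range] at h
  rw [gchoose, h, nsmul_eq_mul, ← mul_assoc, one_div, map_inv₀, map_natCast,
    inv_mul_cancel₀ (Nat.cast_ne_zero.mpr n.factorial_ne_zero), one_mul]

theorem matA_eq_invPascalBorder_mul (k : ℕ) (a b c : K) (hab : a + b = 0) :
    matA k a b c = invPascalBorder k *
      of fun i q : Fin (k + 2) =>
        Ring.choose ((q : ℕ) + Fin.lastCases c (fun _ => a) i : K) i := by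
  ext p q
  rw [mul_apply, Fin.sum_univ_castSucc]
  simp only [invPascalBorder, of_apply, Fin.lastCases_castSucc, Fin.lastCases_last]
  cases p using Fin.lastCases with
  | last =>
    simp [matA, gchoose_eq_choose, Nat.choose_eq_zero_of_lt (Fin.is_lt _)]
  | cast p =>
    have hb : (k : K) - (q : ℕ) + b = k - ((q : ℕ) + a) := by linear_combination hab
    simp only [matA, Fin.val_castSucc, if_pos (Fin.is_le p), hb, gchoose_eq_choose,
      Ring.choose_mul_choose_natCast_sub _ (Fin.is_le p), Fin.castSucc_ne_last, if_false,
      zero_mul, add_zero]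
    exact (Fin.sum_univ_eq_sum_range (fun j => (-1) ^ (p + j : ℕ) * (j.choose p : K) *
      Ring.choose ((q : ℕ) + a : K) j) (k + 1)).symm

end

/-- When `a + b = 0`, the determinant of `A^k(a,b,c)` over `ℚ` is `1`;
in particular the matrix is invertible. -/
theorem det_matA_eq_one_of_add_eq_zero (k : ℕ) (a b c : ℚ) (hab : a + b = 0) :
    (matA k a b c).det = 1 ∧ IsUnit (matA k a b c) := by
  have hdet : (matA k a b c).det = 1 := by
    rw [matA_eq_invPascalBorder_mul k a b c hab, det_mul, det_invPascalBorder,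
      det_choose_natCast_add_eq_one, one_mul]
  exact ⟨hdet, (isUnit_iff_isUnit_det _).mpr (hdet ▸ isUnit_one)⟩
end
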